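/- Let λ ∈ [0,1), Δ = artanh λ, and let R > 0 and s ∈ [−R, R]. Set q = (cosh R − sinh Δ · sinh(s − Δ)) / (cosh Δ · cosh(s − Δ)). Then cosh(R − Δ)/cosh(s − Δ) ≤ q ≤ cosh(R + Δ)/cosh(s − Δ); consequently arcosh(cosh(R−Δ)/cosh(s−Δ)) ≤ arcosh(q) ≤ arcosh(cosh(R+Δ)/cosh(s−Δ)) whenever all three quantities are ≥ 1. -/

import Mathlib

open Real

noncomputable def arcoshLog (t : ℝ) : ℝ := Real.log (t + Real.sqrt (t ^ 2 - 1))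

theorem arcoshLog_eq_arcosh : arcoshLog = arcosh := rfl

theorem arcoshLog_le_arcoshLog {a b : ℝ} (ha : 0 < a) (hab : a ≤ b) :
    arcoshLog a ≤ arcoshLog b := by
  rw [arcoshLog_eq_arcosh]
  exact (arcosh_le_arcosh ha (ha.trans_le hab)).2 hab

section HyperbolicEstimates

variable {R s Δ : ℝ}

-- Expand `cosh R = cosh ((R - Δ) + Δ)` and use `sinh (s - Δ) ≤ sinh (R - Δ)`.
theorem cosh_sub_mul_cosh_le (hΔ : 0 ≤ Δ) (hs : s ≤ R) :
    cosh (R - Δ) * cosh Δ ≤ cosh R - sinh Δ * sinh (s - Δ) := by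
  have hcosh : cosh R = cosh (R - Δ) * cosh Δ + sinh (R - Δ) * sinh Δ := by
    rw [← cosh_add, sub_add_cancel]
  have hsinh : sinh (s - Δ) ≤ sinh (R - Δ) := sinh_le_sinh.2 (by linarith)
  nlinarith [mul_le_mul_of_nonneg_left hsinh (sinh_nonneg_iff.2 hΔ)]

-- Expand `cosh R = cosh ((R + Δ) - Δ)` and use `-sinh (R + Δ) ≤ sinh (s - Δ)`.
theorem cosh_sub_le_cosh_add_mul_cosh (hΔ : 0 ≤ Δ) (hs : -R ≤ s) :
    cosh R - sinh Δ * sinh (s - Δ) ≤ cosh (R + Δ) * cosh Δ := by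
  have hcosh : cosh R = cosh (R + Δ) * cosh Δ - sinh (R + Δ) * sinh Δ := by
    rw [← cosh_sub, add_sub_cancel_right]
  have hsinh : -sinh (R + Δ) ≤ sinh (s - Δ) := by
    rw [← sinh_neg]
    exact sinh_le_sinh.2 (by linarith)
  nlinarith [mul_le_mul_of_nonneg_left hsinh (sinh_nonneg_iff.2 hΔ)]

end HyperbolicEstimates

theorem q_bounds_general (lam : ℝ) (hlam : lam ∈ Set.Ico (0:ℝ) 1) (R s : ℝ)
    (hs : s ∈ Set.Icc (-R) R) (Δ q : ℝ)
    (hΔ : Δ = (1 / 2) * Real.log ((1 + lam) / (1 - lam)))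
    (hq : q = (Real.cosh R - Real.sinh Δ * Real.sinh (s - Δ)) /
      (Real.cosh Δ * Real.cosh (s - Δ))) :
    (Real.cosh (R - Δ) / Real.cosh (s - Δ) ≤ q ∧
      q ≤ Real.cosh (R + Δ) / Real.cosh (s - Δ)) ∧
    (1 ≤ Real.cosh (R - Δ) / Real.cosh (s - Δ) → 1 ≤ q →
      1 ≤ Real.cosh (R + Δ) / Real.cosh (s - Δ) →
      arcoshLog (Real.cosh (R - Δ) / Real.cosh (s - Δ)) ≤ arcoshLog q ∧
        arcoshLog q ≤ arcoshLog (Real.cosh (R + Δ) / Real.cosh (s - Δ))) := by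
  have hΔ0 : 0 ≤ Δ := by
    rw [hΔ, ← artanh_eq_half_log ⟨by linarith [hlam.1], hlam.2.le⟩]
    exact artanh_nonneg hlam.1
  have hden : 0 ≤ cosh Δ * cosh (s - Δ) := by positivity
  have hscale (x : ℝ) : x / cosh (s - Δ) = x * cosh Δ / (cosh Δ * cosh (s - Δ)) := by
    rw [mul_comm (cosh Δ), mul_div_mul_right _ _ (cosh_pos Δ).ne']
  have hlow : cosh (R - Δ) / cosh (s - Δ) ≤ q := by
    rw [hq, hscale]
    exact div_le_div_of_nonneg_right (cosh_sub_mul_cosh_le hΔ0 hs.2) hden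
  have hhigh : q ≤ cosh (R + Δ) / cosh (s - Δ) := by
    rw [hq, hscale]
    exact div_le_div_of_nonneg_right (cosh_sub_le_cosh_add_mul_cosh hΔ0 hs.1) hden
  refine ⟨⟨hlow, hhigh⟩, fun _ hq1 _ => ⟨?_, arcoshLog_le_arcoshLog (by linarith) hhigh⟩⟩
  exact arcoshLog_le_arcoshLog (div_pos (cosh_pos _) (cosh_pos _)) hlow

theorem q_bounds (lam : ℝ) (hlam : lam ∈ Set.Ico (0:ℝ) 1) (R s : ℝ) (hR : 0 < R)
    (hs : s ∈ Set.Icc (-R) R) (Δ q : ℝ)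
    (hΔ : Δ = (1 / 2) * Real.log ((1 + lam) / (1 - lam)))
    (hq : q = (Real.cosh R - Real.sinh Δ * Real.sinh (s - Δ)) /
      (Real.cosh Δ * Real.cosh (s - Δ))) :
    (Real.cosh (R - Δ) / Real.cosh (s - Δ) ≤ q ∧
      q ≤ Real.cosh (R + Δ) / Real.cosh (s - Δ)) ∧
    (1 ≤ Real.cosh (R - Δ) / Real.cosh (s - Δ) → 1 ≤ q →
      1 ≤ Real.cosh (R + Δ) / Real.cosh (s - Δ) →
      arcoshLog (Real.cosh (R - Δ) / Real.cosh (s - Δ)) ≤ arcoshLog q ∧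
        arcoshLog q ≤ arcoshLog (Real.cosh (R + Δ) / Real.cosh (s - Δ))) :=
  q_bounds_general lam hlam R s hs Δ q hΔ hq
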